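/- Let f_cl : ℝⁿ → ℝⁿ and ĝ : ℝⁿ → ℝᵖ be differentiable maps, let Ĝ(x) denote the Jacobian (derivative matrix) of ĝ at x, let A_cl be a p×p real matrix, let M be a symmetric positive definite p×p real matrix, and let γ ∈ (0,1). Assume the discrete Lyapunov inequality A_clᵀ M A_cl ⪯ γ M holds (in the Loewner order), that Ĝ(x) has full column rank for every x ∈ ℝⁿ, and that the intertwining relation Ĝ(f_cl(x)) · Df_cl(x) = A_cl · Ĝ(x) holds for every x ∈ ℝⁿ, where Df_cl(x) is the Jacobian of f_cl at x. Then the matrix-valued map W(x) := Ĝ(x)ᵀ M Ĝ(x) is a contraction metric for f_cl: W(x) is symmetric positive definite for every x, and Df_cl(x)ᵀ W(f_cl(x)) Df_cl(x) ⪯ γ W(x) for every x ∈ ℝⁿ. -/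

import Mathlib

open Matrix

/-- The Jacobian (derivative matrix) of a map `h : ℝⁿ → ℝᵐ` at a point `x`. -/
noncomputable def jacobian {n m : ℕ} (h : (Fin n → ℝ) → (Fin m → ℝ)) (x : Fin n → ℝ) :
    Matrix (Fin m) (Fin n) ℝ :=
  LinearMap.toMatrix' (fderiv ℝ h x).toLinearMap

/-- The Loewner order on real matrices: `P ⪯ Q` iff `Q - P` is positive semidefinite. -/
def LoewnerLE {p : ℕ} (P Q : Matrix (Fin p) (Fin p) ℝ) : Prop := (Q - P).PosSemidef

/-! The intertwining relation `Ĝ(f(x)) Df(x) = A Ĝ(x)` turns the pulled-back metric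
`Df(x)ᵀ W(f(x)) Df(x)` into `Ĝ(x)ᵀ (Aᵀ M A) Ĝ(x)`, so the Lyapunov inequality for `A`,
conjugated by `Ĝ(x)`, is exactly the contraction inequality for `W`. Positive definiteness of
`W(x)` holds because `Ĝ(x)` is injective. -/

theorem Matrix.PosDef.transpose_mul_mul_same {m n : Type*} [Fintype m] [Fintype n]
    {M : Matrix m m ℝ} (hM : M.PosDef) {G : Matrix m n ℝ} (hG : LinearIndependent ℝ Gᵀ) :
    (Gᵀ * M * G).PosDef := by
  rw [← conjTranspose_eq_transpose_of_trivial]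
  exact hM.conjTranspose_mul_mul_same (mulVec_injective_iff.mpr hG)

theorem LoewnerLE.transpose_mul_mul_same {n p : ℕ} {P Q : Matrix (Fin p) (Fin p) ℝ}
    (h : LoewnerLE P Q) (G : Matrix (Fin p) (Fin n) ℝ) :
    LoewnerLE (Gᵀ * P * G) (Gᵀ * Q * G) := by
  unfold LoewnerLE
  rw [← Matrix.sub_mul, ← Matrix.mul_sub, ← conjTranspose_eq_transpose_of_trivial]
  exact h.conjTranspose_mul_mul_same G

theorem Matrix.transpose_mul_mul_eq_of_mul_eq_mul {R m n k : Type*} [CommSemiring R]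
    [Fintype m] [Fintype n] {G' : Matrix m n R} {D : Matrix n k R} {A : Matrix m m R}
    {G : Matrix m k R} (h : G' * D = A * G) (M : Matrix m m R) :
    Dᵀ * (G'ᵀ * M * G') * D = Gᵀ * (Aᵀ * M * A) * G := by
  calc Dᵀ * (G'ᵀ * M * G') * D = (G' * D)ᵀ * M * (G' * D) := by
        simp only [transpose_mul, Matrix.mul_assoc]
    _ = Gᵀ * (Aᵀ * M * A) * G := by
        simp only [h, transpose_mul, Matrix.mul_assoc]

theorem koopman_contraction_metric_general {n p : ℕ}
    (fcl : (Fin n → ℝ) → (Fin n → ℝ)) (g : (Fin n → ℝ) → (Fin p → ℝ))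
    (Acl M : Matrix (Fin p) (Fin p) ℝ) (hM : M.PosDef)
    (γ : ℝ)
    (hLyap : LoewnerLE (Aclᵀ * M * Acl) (γ • M))
    (hrank : ∀ x : Fin n → ℝ, LinearIndependent ℝ (fun j : Fin n => (jacobian g x)ᵀ j))
    (hintertwine : ∀ x : Fin n → ℝ,
      jacobian g (fcl x) * jacobian fcl x = Acl * jacobian g x) :
    (∀ x : Fin n → ℝ, ((jacobian g x)ᵀ * M * jacobian g x).PosDef) ∧
      (∀ x : Fin n → ℝ,
        LoewnerLE
          ((jacobian fcl x)ᵀ * ((jacobian g (fcl x))ᵀ * M * jacobian g (fcl x)) *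
            jacobian fcl x)
          (γ • ((jacobian g x)ᵀ * M * jacobian g x))) := by
  refine ⟨fun x => hM.transpose_mul_mul_same (hrank x), fun x => ?_⟩
  rw [transpose_mul_mul_eq_of_mul_eq_mul (hintertwine x), ← Matrix.smul_mul, ← Matrix.mul_smul]
  exact hLyap.transpose_mul_mul_same (jacobian g x)

/-- If the lifted closed-loop matrix `A_cl` satisfies the discrete Lyapunov
inequality `A_clᵀ M A_cl ⪯ γ M` for a symmetric positive definite `M` and `γ ∈ (0,1)`, the
Jacobian `Ĝ(x)` of the lifting map has full column rank everywhere, and the intertwining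
relation `Ĝ(f_cl(x)) · Df_cl(x) = A_cl · Ĝ(x)` holds everywhere, then
`W(x) := Ĝ(x)ᵀ M Ĝ(x)` is a contraction metric for `f_cl`: each `W(x)` is symmetric positive
definite and `Df_cl(x)ᵀ W(f_cl(x)) Df_cl(x) ⪯ γ W(x)` for all `x`. -/
theorem koopman_contraction_metric {n p : ℕ}
    (fcl : (Fin n → ℝ) → (Fin n → ℝ)) (g : (Fin n → ℝ) → (Fin p → ℝ))
    (hfcl : Differentiable ℝ fcl) (hg : Differentiable ℝ g)
    (Acl M : Matrix (Fin p) (Fin p) ℝ) (hM : M.PosDef)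
    (γ : ℝ) (hγ : γ ∈ Set.Ioo (0 : ℝ) 1)
    (hLyap : LoewnerLE (Aclᵀ * M * Acl) (γ • M))
    (hrank : ∀ x : Fin n → ℝ, LinearIndependent ℝ (fun j : Fin n => (jacobian g x)ᵀ j))
    (hintertwine : ∀ x : Fin n → ℝ,
      jacobian g (fcl x) * jacobian fcl x = Acl * jacobian g x) :
    (∀ x : Fin n → ℝ, ((jacobian g x)ᵀ * M * jacobian g x).PosDef) ∧
      (∀ x : Fin n → ℝ,
        LoewnerLE
          ((jacobian fcl x)ᵀ * ((jacobian g (fcl x))ᵀ * M * jacobian g (fcl x)) *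
            jacobian fcl x)
          (γ • ((jacobian g x)ᵀ * M * jacobian g x))) :=
  koopman_contraction_metric_general fcl g Acl M hM γ hLyap hrank hintertwine
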